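/- Let R be a commutative ring, F a functor from the category of commutative R-algebras to the category of groups, C a commutative R-algebra and I ⊆ C an ideal with I² = 0; set C̄ := C/I, regard I as a C̄-module, and let D := D_{C̄}(I). Let P := C ×_{C̄} D be the fiber product of R-algebras along the quotient map C → C̄ and the augmentation D → C̄, and let ν : P → C be the R-algebra homomorphism sending (u, (ū, j)) to u + j (where ū denotes the image of u in C̄ and j ∈ I). Assume that the canonical maps F(P) → F(C) ×_{F(C̄)} F(D) and F(C ×_{C̄} C) → F(C) ×_{F(C̄)} F(C) are bijections. Then the map from ker(F(D) → F(C̄)) to F(C), which sends ξ to F(ν) applied to the unique element of F(P) corresponding under the first bijection to the pair (1, ξ), is injective and its image is exactly ker(F(C) → F(C̄)); in particular ker(F(C) → F(C̄)) is in bijection with ker(F(D) → F(C̄)). -/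

import Mathlib

universe u v

noncomputable section

/-- For a commutative ring `R` and an `R`-module `M`, the action of `Rᵐᵒᵖ` on `M`
through `R`; this makes the trivial square-zero extension `TrivSqZeroExt R M` (i.e.
`D_R(M) = R ⊕ Mε`) a commutative `R`-algebra. -/
noncomputable instance (priority := low) opModule (R M : Type*) [CommSemiring R]
    [AddCommMonoid M] [Module R M] : Module Rᵐᵒᵖ M :=
  Module.compHom M ((RingHom.id R).fromOpposite mul_comm)

instance (priority := low) opCentral (R M : Type*) [CommSemiring R] [AddCommMonoid M]
    [Module R M] : IsCentralScalar R M := ⟨fun _ _ => rfl⟩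

instance (priority := low) opComm (R M : Type*) [CommSemiring R] [AddCommMonoid M]
    [Module R M] : SMulCommClass R Rᵐᵒᵖ M := ⟨fun r s m => smul_comm r s.unop m⟩

/-- The data of a functor from commutative `R`-algebras (in the same universe as `R`) to
groups. -/
structure GrpFunctorData (R : Type u) [CommRing R] : Type (u + 1) where
  obj : ∀ (A : Type u) [CommRing A] [Algebra R A], Type u
  grp : ∀ (A : Type u) [CommRing A] [Algebra R A], Group (obj A)
  map : ∀ {A B : Type u} [CommRing A] [Algebra R A] [CommRing B] [Algebra R B],
    (A →ₐ[R] B) → obj A → obj B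

attribute [instance] GrpFunctorData.grp

/-- A functor from commutative `R`-algebras to groups. -/
structure GrpFunctor (R : Type u) [CommRing R] extends GrpFunctorData R : Type (u + 1) where
  map_mul : ∀ {A B : Type u} [CommRing A] [Algebra R A] [CommRing B] [Algebra R B]
    (f : A →ₐ[R] B) (x y : toGrpFunctorData.obj A),
    toGrpFunctorData.map f (x * y) = toGrpFunctorData.map f x * toGrpFunctorData.map f y
  map_id : ∀ (A : Type u) [CommRing A] [Algebra R A] (x : toGrpFunctorData.obj A),
    toGrpFunctorData.map (AlgHom.id R A) x = x
  map_comp : ∀ {A B C : Type u} [CommRing A] [Algebra R A] [CommRing B] [Algebra R B]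
    [CommRing C] [Algebra R C] (f : A →ₐ[R] B) (g : B →ₐ[R] C)
    (x : toGrpFunctorData.obj A),
    toGrpFunctorData.map (g.comp f) x = toGrpFunctorData.map g (toGrpFunctorData.map f x)

/-- The fiber product `A ×_C B` of two `R`-algebra homomorphisms `f : A → C`, `g : B → C`,
as a subalgebra of `A × B`. -/
def fiberProd {R A B C : Type*} [CommRing R] [CommRing A] [CommRing B] [CommRing C]
    [Algebra R A] [Algebra R B] [Algebra R C] (f : A →ₐ[R] C) (g : B →ₐ[R] C) :
    Subalgebra R (A × B) where
  carrier := {p | f p.1 = g p.2}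
  mul_mem' := fun {p q} hp hq => by
    simp only [Set.mem_setOf_eq, Prod.fst_mul, Prod.snd_mul, map_mul] at *
    rw [hp, hq]
  add_mem' := fun {p q} hp hq => by
    simp only [Set.mem_setOf_eq, Prod.fst_add, Prod.snd_add, map_add] at *
    rw [hp, hq]
  algebraMap_mem' := fun r => by
    simpa using (f.commutes r).trans (g.commutes r).symm

/-- For a square-zero ideal `I` of `C`, the ideal `I` is a module over `C̄ = C ⧸ I`. -/
def sqZeroModule (C : Type u) [CommRing C] (I : Ideal C) (hI : I ^ 2 = ⊥) :
    Module (C ⧸ I) ↥I :=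
  Module.IsTorsionBySet.module (I := I) (fun x a => by
    have h2 : (a : C) * (x : C) ∈ I ^ 2 := by
      rw [sq]; exact Ideal.mul_mem_mul a.2 x.2
    rw [hI, Ideal.mem_bot] at h2
    exact Subtype.ext (by simpa using h2))

section Aux

set_option synthInstance.maxHeartbeats 400000

variable {R C : Type u} [CommRing R] [CommRing C] [Algebra R C] {I : Ideal C}
variable [Module (C ⧸ I) ↥I] [Algebra R (TrivSqZeroExt (C ⧸ I) ↥I)]

variable (mkC : C →ₐ[R] C ⧸ I) (augD : (TrivSqZeroExt (C ⧸ I) ↥I) →ₐ[R] C ⧸ I)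

/-- The homomorphism ν : C ×_{C̄} (TrivSqZeroExt (C ⧸ I) ↥I) → C, (u, (ū, j)) ↦ u + j. -/
def nuHom (hmk : ∀ c : C, mkC c = Ideal.Quotient.mk I c)
    (haug : ∀ x : (TrivSqZeroExt (C ⧸ I) ↥I), augD x = TrivSqZeroExt.fst x)
    (hsm : ∀ (c : C) (x : ↥I), (((Ideal.Quotient.mk I c) • x : ↥I) : C) = c * x)
    (hsq : ∀ x y : ↥I, (x : C) * (y : C) = 0)
    (halg : ∀ r : R, algebraMap R (TrivSqZeroExt (C ⧸ I) ↥I) r = TrivSqZeroExt.inl (algebraMap R (C ⧸ I) r)) :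
    ↥(fiberProd mkC augD) →ₐ[R] C where
  toFun p := (p : C × (TrivSqZeroExt (C ⧸ I) ↥I)).1 + ((TrivSqZeroExt.snd (p : C × (TrivSqZeroExt (C ⧸ I) ↥I)).2 : ↥I) : C)
  map_one' := by simp
  map_mul' := by
    rintro p q
    have hp : mkC (p : C × (TrivSqZeroExt (C ⧸ I) ↥I)).1 = augD (p : C × (TrivSqZeroExt (C ⧸ I) ↥I)).2 := p.2
    have hq : mkC (q : C × (TrivSqZeroExt (C ⧸ I) ↥I)).1 = augD (q : C × (TrivSqZeroExt (C ⧸ I) ↥I)).2 := q.2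
    rw [hmk, haug] at hp hq
    have hcoe : ((p * q : ↥(fiberProd mkC augD)) : C × (TrivSqZeroExt (C ⧸ I) ↥I)) = (p : C × (TrivSqZeroExt (C ⧸ I) ↥I)) * (q : C × (TrivSqZeroExt (C ⧸ I) ↥I)) := rfl
    rw [hcoe, Prod.fst_mul, Prod.snd_mul, TrivSqZeroExt.snd_mul]
    push_cast
    rw [op_smul_eq_smul, ← hp, ← hq, hsm, hsm]
    linear_combination -hsq (TrivSqZeroExt.snd (p : C × (TrivSqZeroExt (C ⧸ I) ↥I)).2) (TrivSqZeroExt.snd (q : C × (TrivSqZeroExt (C ⧸ I) ↥I)).2)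
  map_zero' := by simp
  map_add' := by
    rintro p q
    have hcoe : ((p + q : ↥(fiberProd mkC augD)) : C × (TrivSqZeroExt (C ⧸ I) ↥I)) = (p : C × (TrivSqZeroExt (C ⧸ I) ↥I)) + (q : C × (TrivSqZeroExt (C ⧸ I) ↥I)) := rfl
    rw [hcoe, Prod.fst_add, Prod.snd_add, TrivSqZeroExt.snd_add]
    push_cast
    ring
  commutes' := by
    intro r
    have hcoe : ((algebraMap R ↥(fiberProd mkC augD) r : ↥(fiberProd mkC augD)) : C × (TrivSqZeroExt (C ⧸ I) ↥I))
        = algebraMap R (C × (TrivSqZeroExt (C ⧸ I) ↥I)) r := rfl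
    rw [hcoe]
    show algebraMap R C r + ((TrivSqZeroExt.snd (algebraMap R (TrivSqZeroExt (C ⧸ I) ↥I) r) : ↥I) : C) = algebraMap R C r
    rw [halg r, TrivSqZeroExt.snd_inl]
    simp

lemma muMem (q : ↥(fiberProd mkC mkC)) (hmk : ∀ c : C, mkC c = Ideal.Quotient.mk I c) :
    ((q : C × C).2 - (q : C × C).1) ∈ I := by
  have hq : mkC (q : C × C).1 = mkC (q : C × C).2 := q.2
  rw [hmk, hmk] at hq
  exact (Ideal.Quotient.eq).mp hq.symm

/-- The homomorphism μ : C ×_{C̄} C → D, (u, v) ↦ (ū, v - u). -/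
def muHom (hmk : ∀ c : C, mkC c = Ideal.Quotient.mk I c)
    (hsm : ∀ (c : C) (x : ↥I), (((Ideal.Quotient.mk I c) • x : ↥I) : C) = c * x)
    (hsq : ∀ x y : ↥I, (x : C) * (y : C) = 0)
    (halg : ∀ r : R, algebraMap R (TrivSqZeroExt (C ⧸ I) ↥I) r
      = TrivSqZeroExt.inl (algebraMap R (C ⧸ I) r)) :
    ↥(fiberProd mkC mkC) →ₐ[R] (TrivSqZeroExt (C ⧸ I) ↥I) where
  toFun q := TrivSqZeroExt.inl (mkC (q : C × C).1)
    + TrivSqZeroExt.inr (⟨(q : C × C).2 - (q : C × C).1, muMem mkC q hmk⟩ : ↥I)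
  map_one' := by
    have h0 : (⟨((1 : ↥(fiberProd mkC mkC)) : C × C).2 - ((1 : ↥(fiberProd mkC mkC)) : C × C).1,
        muMem mkC 1 hmk⟩ : ↥I) = 0 := Subtype.ext (by show (1 : C) - 1 = 0; ring)
    rw [h0, TrivSqZeroExt.inr_zero, add_zero]
    show TrivSqZeroExt.inl (mkC 1) = 1
    rw [map_one, TrivSqZeroExt.inl_one]
  map_mul' := by
    rintro p q
    refine TrivSqZeroExt.ext ?_ ?_
    · have : ((p * q : ↥(fiberProd mkC mkC)) : C × C).1 = (p : C × C).1 * (q : C × C).1 := rfl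
      simp [this]
    · have h1 : ((p * q : ↥(fiberProd mkC mkC)) : C × C).1 = (p : C × C).1 * (q : C × C).1 := rfl
      have h2 : ((p * q : ↥(fiberProd mkC mkC)) : C × C).2 = (p : C × C).2 * (q : C × C).2 := rfl
      simp only [TrivSqZeroExt.snd_add, TrivSqZeroExt.snd_inl, TrivSqZeroExt.snd_mul,
        TrivSqZeroExt.snd_inr, TrivSqZeroExt.fst_add, TrivSqZeroExt.fst_inl,
        TrivSqZeroExt.fst_inr, zero_add, add_zero, h1, h2]
      rw [op_smul_eq_smul]
      apply Subtype.ext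
      push_cast
      simp only [hmk]
      rw [hsm, hsm]
      linear_combination hsq ⟨(p : C × C).2 - (p : C × C).1, muMem mkC p hmk⟩
        ⟨(q : C × C).2 - (q : C × C).1, muMem mkC q hmk⟩
  map_zero' := by
    have h0 : (⟨((0 : ↥(fiberProd mkC mkC)) : C × C).2 - ((0 : ↥(fiberProd mkC mkC)) : C × C).1,
        muMem mkC 0 hmk⟩ : ↥I) = 0 := Subtype.ext (by show (0 : C) - 0 = 0; ring)
    rw [h0, TrivSqZeroExt.inr_zero, add_zero]
    show TrivSqZeroExt.inl (mkC 0) = 0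
    rw [map_zero, TrivSqZeroExt.inl_zero]
  map_add' := by
    rintro p q
    refine TrivSqZeroExt.ext ?_ ?_
    · have : ((p + q : ↥(fiberProd mkC mkC)) : C × C).1 = (p : C × C).1 + (q : C × C).1 := rfl
      simp [this]
    · have h1 : ((p + q : ↥(fiberProd mkC mkC)) : C × C).1 = (p : C × C).1 + (q : C × C).1 := rfl
      have h2 : ((p + q : ↥(fiberProd mkC mkC)) : C × C).2 = (p : C × C).2 + (q : C × C).2 := rfl
      simp only [TrivSqZeroExt.snd_add, TrivSqZeroExt.snd_inl, TrivSqZeroExt.snd_inr,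
        zero_add, h1, h2]
      apply Subtype.ext
      push_cast
      ring
  commutes' := by
    intro r
    have h1 : ((algebraMap R ↥(fiberProd mkC mkC) r : ↥(fiberProd mkC mkC)) : C × C).1
        = algebraMap R C r := rfl
    have h2 : ((algebraMap R ↥(fiberProd mkC mkC) r : ↥(fiberProd mkC mkC)) : C × C).2
        = algebraMap R C r := rfl
    have h0 : (⟨((algebraMap R ↥(fiberProd mkC mkC) r : ↥(fiberProd mkC mkC)) : C × C).2
        - ((algebraMap R ↥(fiberProd mkC mkC) r : ↥(fiberProd mkC mkC)) : C × C).1,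
        muMem mkC _ hmk⟩ : ↥I) = 0 := Subtype.ext (by
          show ((algebraMap R ↥(fiberProd mkC mkC) r : ↥(fiberProd mkC mkC)) : C × C).2
            - ((algebraMap R ↥(fiberProd mkC mkC) r : ↥(fiberProd mkC mkC)) : C × C).1 = (0 : C)
          rw [h1, h2, sub_self])
    rw [h0, TrivSqZeroExt.inr_zero, add_zero, h1, AlgHom.commutes, halg r]

variable (hmk : ∀ c : C, mkC c = Ideal.Quotient.mk I c)
  (haug : ∀ x : TrivSqZeroExt (C ⧸ I) ↥I, augD x = TrivSqZeroExt.fst x)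
  (hsm : ∀ (c : C) (x : ↥I), (((Ideal.Quotient.mk I c) • x : ↥I) : C) = c * x)
  (hsq : ∀ x y : ↥I, (x : C) * (y : C) = 0)
  (halg : ∀ r : R, algebraMap R (TrivSqZeroExt (C ⧸ I) ↥I) r
    = TrivSqZeroExt.inl (algebraMap R (C ⧸ I) r))

/-- The isomorphism α : C ×_{C̄} D → C ×_{C̄} C, (u, d) ↦ (u, ν(u,d)). -/
def alphaHom : ↥(fiberProd mkC augD) →ₐ[R] ↥(fiberProd mkC mkC) :=
  (((AlgHom.fst R C (TrivSqZeroExt (C ⧸ I) ↥I)).comp (fiberProd mkC augD).val).prod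
    (nuHom mkC augD hmk haug hsm hsq halg)).codRestrict (fiberProd mkC mkC) (fun p => by
      show mkC (p : C × TrivSqZeroExt (C ⧸ I) ↥I).1
        = mkC ((p : C × TrivSqZeroExt (C ⧸ I) ↥I).1
          + ((TrivSqZeroExt.snd (p : C × TrivSqZeroExt (C ⧸ I) ↥I).2 : ↥I) : C))
      simp only [map_add, hmk]
      rw [Ideal.Quotient.eq_zero_iff_mem.mpr
        (TrivSqZeroExt.snd (p : C × TrivSqZeroExt (C ⧸ I) ↥I).2).2, add_zero])

/-- The inverse isomorphism β : C ×_{C̄} C → C ×_{C̄} D, (u, v) ↦ (u, μ(u,v)). -/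
def betaHom : ↥(fiberProd mkC mkC) →ₐ[R] ↥(fiberProd mkC augD) :=
  (((AlgHom.fst R C C).comp (fiberProd mkC mkC).val).prod
    (muHom mkC hmk hsm hsq halg)).codRestrict (fiberProd mkC augD) (fun q => by
      show mkC (q : C × C).1 = augD (muHom mkC hmk hsm hsq halg q)
      rw [haug]
      show mkC (q : C × C).1
        = TrivSqZeroExt.fst (TrivSqZeroExt.inl (mkC (q : C × C).1)
          + TrivSqZeroExt.inr (⟨(q : C × C).2 - (q : C × C).1, muMem mkC q hmk⟩ : ↥I))
      simp)

lemma comp_Q1_alpha :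
    ((AlgHom.fst R C C).comp (fiberProd mkC mkC).val).comp
        (alphaHom mkC augD hmk haug hsm hsq halg)
      = (AlgHom.fst R C (TrivSqZeroExt (C ⧸ I) ↥I)).comp (fiberProd mkC augD).val :=
  AlgHom.ext fun _ => rfl

lemma comp_Q2_alpha :
    ((AlgHom.snd R C C).comp (fiberProd mkC mkC).val).comp
        (alphaHom mkC augD hmk haug hsm hsq halg)
      = nuHom mkC augD hmk haug hsm hsq halg :=
  AlgHom.ext fun _ => rfl

lemma comp_P1_beta :
    ((AlgHom.fst R C (TrivSqZeroExt (C ⧸ I) ↥I)).comp (fiberProd mkC augD).val).comp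
        (betaHom mkC augD hmk haug hsm hsq halg)
      = (AlgHom.fst R C C).comp (fiberProd mkC mkC).val :=
  AlgHom.ext fun _ => rfl

lemma comp_P2_beta :
    ((AlgHom.snd R C (TrivSqZeroExt (C ⧸ I) ↥I)).comp (fiberProd mkC augD).val).comp
        (betaHom mkC augD hmk haug hsm hsq halg)
      = muHom mkC hmk hsm hsq halg :=
  AlgHom.ext fun _ => rfl

lemma comp_mk_nu :
    mkC.comp (nuHom mkC augD hmk haug hsm hsq halg)
      = augD.comp ((AlgHom.snd R C (TrivSqZeroExt (C ⧸ I) ↥I)).comp (fiberProd mkC augD).val) := by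
  refine AlgHom.ext fun p => ?_
  show mkC ((p : C × TrivSqZeroExt (C ⧸ I) ↥I).1
      + ((TrivSqZeroExt.snd (p : C × TrivSqZeroExt (C ⧸ I) ↥I).2 : ↥I) : C))
    = augD (p : C × TrivSqZeroExt (C ⧸ I) ↥I).2
  have hp : mkC (p : C × TrivSqZeroExt (C ⧸ I) ↥I).1
      = augD (p : C × TrivSqZeroExt (C ⧸ I) ↥I).2 := p.2
  simp only [map_add, hmk] at *
  rw [Ideal.Quotient.eq_zero_iff_mem.mpr
    (TrivSqZeroExt.snd (p : C × TrivSqZeroExt (C ⧸ I) ↥I).2).2, add_zero, hp]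

lemma comp_mu_alpha :
    (muHom mkC hmk hsm hsq halg).comp (alphaHom mkC augD hmk haug hsm hsq halg)
      = (AlgHom.snd R C (TrivSqZeroExt (C ⧸ I) ↥I)).comp (fiberProd mkC augD).val := by
  refine AlgHom.ext fun p => ?_
  have hp : mkC (p : C × TrivSqZeroExt (C ⧸ I) ↥I).1
      = augD (p : C × TrivSqZeroExt (C ⧸ I) ↥I).2 := p.2
  rw [hmk, haug] at hp
  show TrivSqZeroExt.inl (mkC (p : C × TrivSqZeroExt (C ⧸ I) ↥I).1) + TrivSqZeroExt.inr _
    = (p : C × TrivSqZeroExt (C ⧸ I) ↥I).2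
  refine TrivSqZeroExt.ext ?_ ?_
  · simp only [TrivSqZeroExt.fst_add, TrivSqZeroExt.fst_inl, TrivSqZeroExt.fst_inr, add_zero,
      hmk, hp]
  · simp only [TrivSqZeroExt.snd_add, TrivSqZeroExt.snd_inl, TrivSqZeroExt.snd_inr, zero_add]
    apply Subtype.ext
    show ((p : C × TrivSqZeroExt (C ⧸ I) ↥I).1
        + ((TrivSqZeroExt.snd (p : C × TrivSqZeroExt (C ⧸ I) ↥I).2 : ↥I) : C))
        - (p : C × TrivSqZeroExt (C ⧸ I) ↥I).1
      = ((TrivSqZeroExt.snd (p : C × TrivSqZeroExt (C ⧸ I) ↥I).2 : ↥I) : C)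
    ring

lemma comp_alpha_beta :
    (alphaHom mkC augD hmk haug hsm hsq halg).comp (betaHom mkC augD hmk haug hsm hsq halg)
      = AlgHom.id R ↥(fiberProd mkC mkC) := by
  refine AlgHom.ext fun q => ?_
  apply Subtype.ext
  apply Prod.ext
  · rfl
  · show (q : C × C).1 + ((TrivSqZeroExt.snd (TrivSqZeroExt.inl (mkC (q : C × C).1)
      + TrivSqZeroExt.inr (⟨(q : C × C).2 - (q : C × C).1, muMem mkC q hmk⟩ : ↥I)) : ↥I) : C)
      = (q : C × C).2
    simp only [TrivSqZeroExt.snd_add, TrivSqZeroExt.snd_inl, TrivSqZeroExt.snd_inr, zero_add]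
    show (q : C × C).1 + ((q : C × C).2 - (q : C × C).1) = (q : C × C).2
    ring

end Aux

lemma GrpFunctor.map_one'' {R : Type u} [CommRing R] (F : GrpFunctor R)
    {A B : Type u} [CommRing A] [Algebra R A] [CommRing B] [Algebra R B] (f : A →ₐ[R] B) :
    F.map f 1 = 1 := by
  have h := F.map_mul f 1 1
  rw [one_mul] at h
  exact left_eq_mul.mp h

set_option maxHeartbeats 1000000 in
set_option synthInstance.maxHeartbeats 400000 in
/-- let `F` be a functor from commutative `R`-algebras to groups, `C` a
commutative `R`-algebra and `I ⊆ C` an ideal with `I² = 0`; set `C̄ := C/I`, regard `I` as a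
`C̄`-module, and let `D := D_{C̄}(I)`.  Let `P := C ×_{C̄} D` (fiber product along the quotient
map `C → C̄` and the augmentation `D → C̄`) and let `ν : P → C` be the `R`-algebra
homomorphism `(u, (ū, j)) ↦ u + j`.  If the canonical maps `F(P) → F(C) ×_{F(C̄)} F(D)` and
`F(C ×_{C̄} C) → F(C) ×_{F(C̄)} F(C)` are bijections, then the map
`ker(F(D) → F(C̄)) → F(C)` sending `ξ` to `F(ν)` of the unique element of `F(P)` lying over
`(1, ξ)` is injective with image exactly `ker(F(C) → F(C̄))`; in particular these two kernels
are in bijection. -/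
theorem stmt19 (R : Type u) [CommRing R] (F : GrpFunctor R)
    (C : Type u) [CommRing C] [Algebra R C] (I : Ideal C) (hI : I ^ 2 = ⊥) :
    letI : Module (C ⧸ I) ↥I := sqZeroModule C I hI
    letI : Algebra R (TrivSqZeroExt (C ⧸ I) ↥I) :=
      ((algebraMap (C ⧸ I) (TrivSqZeroExt (C ⧸ I) ↥I)).comp (algebraMap R (C ⧸ I))).toAlgebra
    ∀ (mkC : C →ₐ[R] C ⧸ I) (_ : ∀ c : C, mkC c = Ideal.Quotient.mk I c)
      (augD : TrivSqZeroExt (C ⧸ I) ↥I →ₐ[R] C ⧸ I)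
      (_ : ∀ x : TrivSqZeroExt (C ⧸ I) ↥I, augD x = TrivSqZeroExt.fst x),
    ∃ ν : ↥(fiberProd mkC augD) →ₐ[R] C,
      (∀ p : ↥(fiberProd mkC augD),
        ν p = (p : C × TrivSqZeroExt (C ⧸ I) ↥I).1
          + ((TrivSqZeroExt.snd (p : C × TrivSqZeroExt (C ⧸ I) ↥I).2 : ↥I) : C)) ∧
      (((Function.Injective (fun x : F.obj ↥(fiberProd mkC augD) =>
            (F.map ((AlgHom.fst R C (TrivSqZeroExt (C ⧸ I) ↥I)).comp
                (fiberProd mkC augD).val) x,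
             F.map ((AlgHom.snd R C (TrivSqZeroExt (C ⧸ I) ↥I)).comp
                (fiberProd mkC augD).val) x)) ∧
          Set.range (fun x : F.obj ↥(fiberProd mkC augD) =>
            (F.map ((AlgHom.fst R C (TrivSqZeroExt (C ⧸ I) ↥I)).comp
                (fiberProd mkC augD).val) x,
             F.map ((AlgHom.snd R C (TrivSqZeroExt (C ⧸ I) ↥I)).comp
                (fiberProd mkC augD).val) x))
            = {p | F.map mkC p.1 = F.map augD p.2}) ∧
        (Function.Injective (fun x : F.obj ↥(fiberProd mkC mkC) =>
            (F.map ((AlgHom.fst R C C).comp (fiberProd mkC mkC).val) x,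
             F.map ((AlgHom.snd R C C).comp (fiberProd mkC mkC).val) x)) ∧
          Set.range (fun x : F.obj ↥(fiberProd mkC mkC) =>
            (F.map ((AlgHom.fst R C C).comp (fiberProd mkC mkC).val) x,
             F.map ((AlgHom.snd R C C).comp (fiberProd mkC mkC).val) x))
            = {p | F.map mkC p.1 = F.map mkC p.2})) →
        ∃ Φ : {ξ : F.obj (TrivSqZeroExt (C ⧸ I) ↥I) // F.map augD ξ = 1} → F.obj C,
          (∀ (ξ : {ξ : F.obj (TrivSqZeroExt (C ⧸ I) ↥I) // F.map augD ξ = 1})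
              (p : F.obj ↥(fiberProd mkC augD)),
            F.map ((AlgHom.fst R C (TrivSqZeroExt (C ⧸ I) ↥I)).comp
                (fiberProd mkC augD).val) p = 1 →
            F.map ((AlgHom.snd R C (TrivSqZeroExt (C ⧸ I) ↥I)).comp
                (fiberProd mkC augD).val) p = ξ.1 →
            Φ ξ = F.map ν p) ∧
          Function.Injective Φ ∧
          Set.range Φ = {c : F.obj C | F.map mkC c = 1}) := by
  intro mkC hmk augD haug
  letI : Module (C ⧸ I) ↥I := sqZeroModule C I hI
  letI : Algebra R (TrivSqZeroExt (C ⧸ I) ↥I) :=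
    ((algebraMap (C ⧸ I) (TrivSqZeroExt (C ⧸ I) ↥I)).comp (algebraMap R (C ⧸ I))).toAlgebra
  have hsm : ∀ (c : C) (x : ↥I), (((Ideal.Quotient.mk I c) • x : ↥I) : C) = c * x :=
    fun c x => rfl
  have hsq : ∀ x y : ↥I, (x : C) * (y : C) = 0 := fun x y => by
    have h2 : (x : C) * y ∈ I ^ 2 := by rw [sq]; exact Ideal.mul_mem_mul x.2 y.2
    rwa [hI, Ideal.mem_bot] at h2
  have halg : ∀ r : R, algebraMap R (TrivSqZeroExt (C ⧸ I) ↥I) r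
      = TrivSqZeroExt.inl (algebraMap R (C ⧸ I) r) := fun r => by
    rw [RingHom.algebraMap_toAlgebra, RingHom.comp_apply]
    exact congrFun (TrivSqZeroExt.algebraMap_eq_inl (C ⧸ I) ↥I) _
  set ν := nuHom mkC augD hmk haug hsm hsq halg with hνdef
  refine ⟨ν, fun p => rfl, ?_⟩
  rintro ⟨⟨hPinj, hPrange⟩, hQinj, hQrange⟩
  set μ := muHom mkC hmk hsm hsq halg with hμdef
  set α := alphaHom mkC augD hmk haug hsm hsq halg with hαdef
  set β := betaHom mkC augD hmk haug hsm hsq halg with hβdef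
  set p1P := (AlgHom.fst R C (TrivSqZeroExt (C ⧸ I) ↥I)).comp (fiberProd mkC augD).val
    with hp1Pdef
  set p2P := (AlgHom.snd R C (TrivSqZeroExt (C ⧸ I) ↥I)).comp (fiberProd mkC augD).val
    with hp2Pdef
  set p1Q := (AlgHom.fst R C C).comp (fiberProd mkC mkC).val with hp1Qdef
  set p2Q := (AlgHom.snd R C C).comp (fiberProd mkC mkC).val with hp2Qdef
  have hQ1 : p1Q.comp α = p1P := comp_Q1_alpha mkC augD hmk haug hsm hsq halg
  have hQ2 : p2Q.comp α = ν := comp_Q2_alpha mkC augD hmk haug hsm hsq halg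
  have hP1 : p1P.comp β = p1Q := comp_P1_beta mkC augD hmk haug hsm hsq halg
  have hP2 : p2P.comp β = μ := comp_P2_beta mkC augD hmk haug hsm hsq halg
  have hkey : mkC.comp ν = augD.comp p2P := comp_mk_nu mkC augD hmk haug hsm hsq halg
  have hμα : μ.comp α = p2P := comp_mu_alpha mkC augD hmk haug hsm hsq halg
  have hαβ : α.comp β = AlgHom.id R ↥(fiberProd mkC mkC) :=
    comp_alpha_beta mkC augD hmk haug hsm hsq halg
  have hνβ : ν.comp β = p2Q := by
    rw [← hQ2, AlgHom.comp_assoc, hαβ, AlgHom.comp_id]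
  have hex : ∀ ξ : {ξ : F.obj (TrivSqZeroExt (C ⧸ I) ↥I) // F.map augD ξ = 1},
      ∃ p : F.obj ↥(fiberProd mkC augD),
        (F.map p1P p, F.map p2P p) = ((1 : F.obj C), ξ.1) := by
    intro ξ
    have hmem : ((1 : F.obj C), ξ.1) ∈ {p : F.obj C × F.obj (TrivSqZeroExt (C ⧸ I) ↥I) |
        F.map mkC p.1 = F.map augD p.2} := by
      show F.map mkC 1 = F.map augD ξ.1
      rw [ξ.2, GrpFunctor.map_one'']
    rw [← hPrange] at hmem
    exact hmem
  have hval1 : ∀ ξ, F.map p1P (hex ξ).choose = 1 :=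
    fun ξ => congrArg Prod.fst (hex ξ).choose_spec
  have hval2 : ∀ ξ, F.map p2P (hex ξ).choose = ξ.1 :=
    fun ξ => congrArg Prod.snd (hex ξ).choose_spec
  refine ⟨fun ξ => F.map ν (hex ξ).choose, ?_, ?_, ?_⟩
  · intro ξ p h1 h2
    have heq : (F.map p1P p, F.map p2P p)
        = (F.map p1P (hex ξ).choose, F.map p2P (hex ξ).choose) := by
      rw [(hex ξ).choose_spec, h1, h2]
    exact (congrArg (F.map ν) (hPinj heq)).symm
  · intro ξ ξ' h
    have e1 : ∀ ζ, F.map p1Q (F.map α (hex ζ).choose) = 1 := fun ζ => by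
      rw [← F.map_comp α p1Q, hQ1, hval1]
    have e2 : ∀ ζ, F.map p2Q (F.map α (hex ζ).choose) = F.map ν (hex ζ).choose := fun ζ => by
      rw [← F.map_comp α p2Q, hQ2]
    have hα : F.map α (hex ξ).choose = F.map α (hex ξ').choose := hQinj (by
      show (F.map p1Q _, F.map p2Q _) = (F.map p1Q _, F.map p2Q _)
      rw [e1, e1, e2, e2]
      exact congrArg _ h)
    have t1 := congrArg (F.map μ) hα
    rw [← F.map_comp α μ, ← F.map_comp α μ, hμα, hval2, hval2] at t1
    exact Subtype.ext t1
  · ext c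
    simp only [Set.mem_range, Set.mem_setOf_eq]
    constructor
    · rintro ⟨ξ, rfl⟩
      rw [← F.map_comp ν mkC, hkey, F.map_comp p2P augD, hval2, ξ.2]
    · intro hc
      have hmem : ((1 : F.obj C), c) ∈ Set.range (fun x : F.obj ↥(fiberProd mkC mkC) =>
          (F.map p1Q x, F.map p2Q x)) := by
        rw [hQrange]
        show F.map mkC 1 = F.map mkC c
        rw [hc, GrpFunctor.map_one'']
      obtain ⟨q, hq⟩ := hmem
      have hq1 : F.map p1Q q = 1 := congrArg Prod.fst hq
      have hq2 : F.map p2Q q = c := congrArg Prod.snd hq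
      have hp1 : F.map p1P (F.map β q) = 1 := by rw [← F.map_comp β p1P, hP1, hq1]
      have hνp : F.map ν (F.map β q) = c := by rw [← F.map_comp β ν, hνβ, hq2]
      have hξ : F.map augD (F.map p2P (F.map β q)) = 1 := by
        rw [← F.map_comp p2P augD, ← hkey, F.map_comp ν mkC, hνp, hc]
      refine ⟨⟨F.map p2P (F.map β q), hξ⟩, ?_⟩
      have heq : (F.map p1P (F.map β q), F.map p2P (F.map β q))
          = (F.map p1P (hex ⟨F.map p2P (F.map β q), hξ⟩).choose,
             F.map p2P (hex ⟨F.map p2P (F.map β q), hξ⟩).choose) := by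
        rw [(hex _).choose_spec, hp1]
      rw [← hPinj heq, hνp]

end
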